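/- arXiv:2501.10333 — 5 statements merged into one kernel-verified Lean document; each statement's English description precedes it below -/
import Mathlib

section
/- For every integer m ≥ 3 one has δ_1(1, m+1) ≤ δ_1(1, m); that is, the sequence (δ_1(1,m))_{m ≥ 3} of densities of the set of positive integers with exactly one non-trivial divisor strictly below m is non-increasing (and in particular unimodal). -/
/-- `Llcm n m` is the least common multiple of the integers strictly between `n` and `m`,
i.e. of `{n+1, ..., m-1}`. -/
def Llcm (n m : ℕ) : ℕ := (Finset.Ioo n m).lcm id

/-- `delta r n m` is the density `δ_r(n,m)` of positive integers with exactly `r`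
divisors in the open interval `(n, m)`: the proportion of `x ∈ {1, ..., Llcm n m}`
having exactly `r` divisors `d` with `n < d < m`. -/
def delta (r n m : ℕ) : ℚ :=
  (((Finset.Icc 1 (Llcm n m)).filter
      (fun x => ((Finset.Ioo n m).filter (fun d => d ∣ x)).card = r)).card : ℚ) /
    (Llcm n m : ℚ)

open Finset
open scoped Nat

/-!
Going from `m` to `m + 1` adds the single candidate divisor `m`. Counting over the common period
`N = m · L`, `L = lcm(2, …, m-1)`, the number of `x` with exactly one divisor gains the multiples
of `m` with no divisor in `(1, m)` and loses those with exactly one. For composite `m` there are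
none of the former; for prime `m`, writing `x = m u` reduces the comparison to `δ₀(1,m) ≤ δ₁(1,m)`.
The integers in `[1, L]` with no divisor in `(1, m)` are coprime to `L`, so there are at most
`φ(L)` of them, while for a prime `p < m` the numbers `p v` with `v ≤ L / p` coprime to `L / p`
have `p` as their only divisor in `(1, m)`; these are `φ(L / p) ≥ φ(L) / p` many, and
`1/2 + 1/3 + 1/5 > 1` (the cases `m ≤ 5` are checked directly).
-/

def divisorsIn (n m x : ℕ) : Finset ℕ := {d ∈ Ioo n m | d ∣ x}

lemma delta_eq (r n m : ℕ) :
    delta r n m = #{x ∈ Icc 1 (Llcm n m) | #(divisorsIn n m x) = r} / (Llcm n m : ℚ) := rfl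

lemma dvd_Llcm {n m d : ℕ} (hd : d ∈ Ioo n m) : d ∣ Llcm n m := dvd_lcm hd

lemma Llcm_pos (n m : ℕ) : 0 < Llcm n m := by
  refine Nat.pos_of_ne_zero fun h => ?_
  obtain ⟨d, hd, hd0⟩ := lcm_eq_zero_iff.1 h
  simp only [mem_Ioo, id_eq] at hd hd0
  omega

lemma Llcm_succ_dvd_mul (n m : ℕ) : Llcm n (m + 1) ∣ m * Llcm n m :=
  Finset.lcm_dvd fun d hd => by
    obtain ⟨hnd, hdm⟩ := mem_Ioo.1 hd
    rcases Nat.lt_succ_iff_lt_or_eq.1 hdm with hdm | rfl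
    · exact (dvd_Llcm (mem_Ioo.2 ⟨hnd, hdm⟩)).mul_left m
    · exact dvd_mul_right d _

lemma divisorsIn_add_Llcm (n m x : ℕ) : divisorsIn n m (x + Llcm n m) = divisorsIn n m x :=
  filter_congr fun _ hd => Nat.dvd_add_left (dvd_Llcm hd)

lemma Nat.count_mul_of_periodic {p : ℕ → Prop} [DecidablePred p] {a : ℕ}
    (hp : Function.Periodic p a) (k : ℕ) : Nat.count p (k * a) = k * Nat.count p a := by
  induction k with
  | zero => simp
  | succ k ih =>
    have hshift : (fun j => p (k * a + j)) = p := funext fun j => by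
      rw [add_comm]; exact hp.nat_mul k j
    rw [add_mul, one_mul, Nat.count_add, ih]
    simp only [hshift]
    ring

lemma card_filter_Icc_eq_count {p : ℕ → Prop} [DecidablePred p] {a : ℕ}
    (hp : Function.Periodic p a) : #{x ∈ Icc 1 a | p x} = Nat.count p a := by
  rw [← Ico_add_one_right_eq_Icc, add_comm, Nat.filter_Ico_card_eq_of_periodic 1 a p hp]

lemma card_filter_Icc_mul_of_periodic {p : ℕ → Prop} [DecidablePred p] {a : ℕ}
    (hp : Function.Periodic p a) (k : ℕ) :
    #{x ∈ Icc 1 (k * a) | p x} = k * #{x ∈ Icc 1 a | p x} := by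
  have hpk : Function.Periodic p (k * a) := by simpa only [Nat.cast_id] using hp.nat_mul k
  rw [card_filter_Icc_eq_count hpk, card_filter_Icc_eq_count hp,
    Nat.count_mul_of_periodic hp]

lemma delta_eq_of_Llcm_dvd {r n m N : ℕ} (hN : Llcm n m ∣ N) (hN0 : N ≠ 0) :
    delta r n m = #{x ∈ Icc 1 N | #(divisorsIn n m x) = r} / (N : ℚ) := by
  obtain ⟨k, rfl⟩ := hN
  have hper : Function.Periodic (fun x => #(divisorsIn n m x) = r) (Llcm n m) := fun x => by
    simp only [divisorsIn_add_Llcm]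
  have hk : (k : ℚ) ≠ 0 := by exact_mod_cast right_ne_zero_of_mul hN0
  rw [delta_eq, mul_comm, card_filter_Icc_mul_of_periodic hper]
  push_cast
  rw [mul_div_mul_left _ _ hk]

lemma card_divisorsIn_succ {n m : ℕ} (hnm : n < m) (x : ℕ) :
    #(divisorsIn n (m + 1) x) = #(divisorsIn n m x) + if m ∣ x then 1 else 0 := by
  rw [divisorsIn, divisorsIn, Ioo_add_one_right_eq_Ioc, ← Ioo_insert_right hnm, filter_insert]
  split_ifs
  · rw [card_insert_of_notMem (fun h => by simp at h)]
  · rfl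

lemma card_succ_add_card_dvd_eq_one (n m N : ℕ) (hnm : n < m) :
    #{x ∈ Icc 1 N | #(divisorsIn n (m + 1) x) = 1} +
        #{x ∈ Icc 1 N | m ∣ x ∧ #(divisorsIn n m x) = 1} =
      #{x ∈ Icc 1 N | #(divisorsIn n m x) = 1} +
        #{x ∈ Icc 1 N | m ∣ x ∧ #(divisorsIn n m x) = 0} := by
  simp only [card_filter, ← sum_add_distrib]
  refine sum_congr rfl fun x _ => ?_
  rw [card_divisorsIn_succ hnm]
  split_ifs <;> omega

lemma divisorsIn_prime_mul {p : ℕ} (hp : p.Prime) (n u : ℕ) :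
    divisorsIn n p (p * u) = divisorsIn n p u :=
  filter_congr fun d hd => by
    have hdp : d.Coprime p :=
      ((hp.coprime_iff_not_dvd).2 (Nat.not_dvd_of_pos_of_lt (by grind) (mem_Ioo.1 hd).2)).symm
    exact hdp.dvd_mul_left

lemma filter_Icc_mul_dvd {p : ℕ} (hp : 0 < p) (L : ℕ) :
    {x ∈ Icc 1 (p * L) | p ∣ x} = (Icc 1 L).image (p * ·) := by
  ext x
  simp only [mem_filter, mem_Icc, mem_image]
  constructor
  · rintro ⟨⟨h1, h2⟩, u, rfl⟩
    exact ⟨u, ⟨Nat.pos_of_mul_pos_left h1, Nat.le_of_mul_le_mul_left h2 hp⟩, rfl⟩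
  · rintro ⟨u, ⟨h1, h2⟩, rfl⟩
    exact ⟨⟨Nat.mul_pos hp h1, Nat.mul_le_mul_left p h2⟩, dvd_mul_right p u⟩

lemma card_filter_dvd_divisorsIn_prime {p : ℕ} (hp : p.Prime) (n L r : ℕ) :
    #{x ∈ Icc 1 (p * L) | p ∣ x ∧ #(divisorsIn n p x) = r} =
      #{u ∈ Icc 1 L | #(divisorsIn n p u) = r} := by
  rw [← filter_filter, filter_Icc_mul_dvd hp.pos, filter_image,
    card_image_of_injective _ (mul_right_injective₀ hp.ne_zero)]
  simp only [divisorsIn_prime_mul hp]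

lemma coprime_Llcm_of_divisorsIn_eq_empty {m u : ℕ} (hu : divisorsIn 1 m u = ∅) :
    (Llcm 1 m).Coprime u := by
  refine Nat.coprime_of_dvd fun q hq hqL hqu => ?_
  obtain ⟨d, hd, hqd⟩ :=
    (Prime.dvd_finsetProd_iff hq.prime _).1 (hqL.trans (lcm_dvd_prod _ _))
  have hd := mem_Ioo.1 hd
  have hq_mem : q ∈ divisorsIn 1 m u :=
    mem_filter.2 ⟨mem_Ioo.2 ⟨hq.one_lt, (Nat.le_of_dvd (by omega : 0 < d) hqd).trans_lt hd.2⟩, hqu⟩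
  simp [hu] at hq_mem

lemma card_divisorsIn_eq_zero_le_totient (m : ℕ) :
    #{u ∈ Icc 1 (Llcm 1 m) | #(divisorsIn 1 m u) = 0} ≤ φ (Llcm 1 m) := by
  rw [← Nat.filter_coprime_Ico_eq_totient _ 1, add_comm, Ico_add_one_right_eq_Icc]
  refine card_le_card fun u hu => ?_
  obtain ⟨huI, hu0⟩ := mem_filter.1 hu
  exact mem_filter.2 ⟨huI, coprime_Llcm_of_divisorsIn_eq_empty (card_eq_zero.1 hu0)⟩

lemma divisorsIn_prime_mul_eq_singleton {n m p v : ℕ} (hn : 1 ≤ n) (hp : p.Prime)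
    (hpm : p ∈ Ioo n m) (hv : (Llcm n m / p).Coprime v) : divisorsIn n m (p * v) = {p} := by
  refine eq_singleton_iff_unique_mem.2 ⟨mem_filter.2 ⟨hpm, dvd_mul_right p v⟩, fun d hd => ?_⟩
  obtain ⟨hd, hdpv⟩ := mem_filter.1 hd
  -- `d` divides `gcd (p * v) L = p * gcd v (L / p) = p`
  have hdp : d ∣ p := by
    have hdgcd := Nat.dvd_gcd hdpv (dvd_Llcm hd)
    rwa [← Nat.mul_div_cancel' (dvd_Llcm hpm), Nat.gcd_mul_left, hv.symm.gcd_eq_one,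
      mul_one] at hdgcd
  exact (hp.eq_one_or_self_of_dvd d hdp).resolve_left (by grind)

lemma totient_Llcm_div_le_card_divisorsIn_eq_singleton {n m p : ℕ} (hn : 1 ≤ n)
    (hp : p.Prime) (hpm : p ∈ Ioo n m) :
    φ (Llcm n m / p) ≤ #{u ∈ Icc 1 (Llcm n m) | divisorsIn n m u = {p}} := by
  have hpL : p * (Llcm n m / p) = Llcm n m := Nat.mul_div_cancel' (dvd_Llcm hpm)
  rw [← Nat.filter_coprime_Ico_eq_totient _ 1, add_comm, Ico_add_one_right_eq_Icc,
    ← card_image_of_injective _ (mul_right_injective₀ hp.ne_zero)]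
  refine card_le_card fun x hx => ?_
  obtain ⟨v, hv, rfl⟩ := mem_image.1 hx
  obtain ⟨hvI, hvc⟩ := mem_filter.1 hv
  obtain ⟨hv1, hvL⟩ := mem_Icc.1 hvI
  exact mem_filter.2 ⟨mem_Icc.2 ⟨Nat.mul_pos hp.pos hv1, hpL ▸ Nat.mul_le_mul_left p hvL⟩,
    divisorsIn_prime_mul_eq_singleton hn hp hpm hvc⟩

lemma sum_card_divisorsIn_eq_singleton_le (n m N : ℕ) (P : Finset ℕ) :
    ∑ p ∈ P, #{u ∈ Icc 1 N | divisorsIn n m u = {p}} ≤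
      #{u ∈ Icc 1 N | #(divisorsIn n m u) = 1} := by
  rw [← card_biUnion fun p _ q _ hpq =>
    disjoint_filter.2 fun u _ hup huq => hpq (singleton_inj.1 (hup.symm.trans huq))]
  refine card_le_card fun u hu => ?_
  obtain ⟨p, -, hu⟩ := mem_biUnion.1 hu
  obtain ⟨huN, hup⟩ := mem_filter.1 hu
  exact mem_filter.2 ⟨huN, by rw [hup, card_singleton]⟩

lemma totient_prime_mul_le {p : ℕ} (hp : p.Prime) (k : ℕ) : φ (p * k) ≤ p * φ k := by
  by_cases h : p ∣ k
  · rw [Nat.totient_mul_of_prime_of_dvd hp h]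
  · rw [Nat.totient_mul_of_prime_of_not_dvd hp h]
    exact Nat.mul_le_mul_right _ (Nat.sub_le p 1)

lemma card_divisorsIn_eq_zero_le_card_eq_one {m : ℕ} (hm : 3 ≤ m) :
    #{u ∈ Icc 1 (Llcm 1 m) | #(divisorsIn 1 m u) = 0} ≤
      #{u ∈ Icc 1 (Llcm 1 m) | #(divisorsIn 1 m u) = 1} := by
  rcases (by omega : m ≤ 5 ∨ 6 ≤ m) with hm5 | hm6
  · interval_cases m <;> decide
  have hmem : ∀ p ∈ ({2, 3, 5} : Finset ℕ), p.Prime ∧ p ∈ Ioo 1 m := by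
    simp only [mem_insert, mem_singleton, mem_Ioo]
    rintro p (rfl | rfl | rfl) <;> norm_num <;> omega
  have hsingle : ∑ p ∈ ({2, 3, 5} : Finset ℕ), φ (Llcm 1 m / p) ≤
      #{u ∈ Icc 1 (Llcm 1 m) | #(divisorsIn 1 m u) = 1} :=
    (sum_le_sum fun p hp => totient_Llcm_div_le_card_divisorsIn_eq_singleton le_rfl
      (hmem p hp).1 (hmem p hp).2).trans (sum_card_divisorsIn_eq_singleton_le _ _ _ _)
  have htot : ∀ p ∈ ({2, 3, 5} : Finset ℕ), φ (Llcm 1 m) ≤ p * φ (Llcm 1 m / p) := fun p hp => by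
    simpa only [Nat.mul_div_cancel' (dvd_Llcm (hmem p hp).2)] using
      totient_prime_mul_le (hmem p hp).1 (Llcm 1 m / p)
  rw [sum_insert (by decide), sum_insert (by decide), sum_singleton] at hsingle
  have := card_divisorsIn_eq_zero_le_totient m
  have := htot 2 (by decide)
  have := htot 3 (by decide)
  have := htot 5 (by decide)
  omega

lemma card_dvd_divisorsIn_eq_zero_le_one {m : ℕ} (hm : 3 ≤ m) :
    #{x ∈ Icc 1 (m * Llcm 1 m) | m ∣ x ∧ #(divisorsIn 1 m x) = 0} ≤
      #{x ∈ Icc 1 (m * Llcm 1 m) | m ∣ x ∧ #(divisorsIn 1 m x) = 1} := by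
  by_cases hp : m.Prime
  · rw [card_filter_dvd_divisorsIn_prime hp, card_filter_dvd_divisorsIn_prime hp]
    exact card_divisorsIn_eq_zero_le_card_eq_one hm
  obtain ⟨d, hdm, hd2, hdm'⟩ := Nat.exists_dvd_of_not_prime2 (by omega) hp
  suffices h : #{x ∈ Icc 1 (m * Llcm 1 m) | m ∣ x ∧ #(divisorsIn 1 m x) = 0} = 0 by omega
  refine card_eq_zero.2 (filter_eq_empty_iff.2 fun x _ ⟨hmx, hx⟩ => ?_)
  have hd : d ∈ divisorsIn 1 m x := mem_filter.2 ⟨mem_Ioo.2 ⟨hd2, hdm'⟩, hdm.trans hmx⟩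
  simp [card_eq_zero.1 hx] at hd

/-- For every integer `m ≥ 3`, `δ_1(1, m+1) ≤ δ_1(1, m)`: the sequence
`(δ_1(1,m))_{m ≥ 3}` is non-increasing (hence unimodal). -/
theorem delta_one_one_nonincreasing (m : ℕ) (hm : 3 ≤ m) :
    delta 1 1 (m + 1) ≤ delta 1 1 m := by
  have hN : m * Llcm 1 m ≠ 0 := mul_ne_zero (by omega) (Llcm_pos 1 m).ne'
  rw [delta_eq_of_Llcm_dvd (Llcm_succ_dvd_mul 1 m) hN,
    delta_eq_of_Llcm_dvd (dvd_mul_left _ _) hN]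
  refine div_le_div_of_nonneg_right (Nat.cast_le.2 ?_) (Nat.cast_nonneg _)
  have := card_succ_add_card_dvd_eq_one 1 m (m * Llcm 1 m) (by omega)
  have := card_dvd_divisorsIn_eq_zero_le_one hm
  omega
end

section
/- Let p ≥ 3 be a prime, let L = lcm{1,2,...,p-1}, and let A = #{x ∈ {1,...,L} : x has exactly one divisor d with 1 < d < p}. Then lcm{1,2,...,p} = p·L and #{x ∈ {1,...,p·L} : x has exactly one divisor d with 1 < d ≤ p} = (p-1)·A + φ(L), where φ is Euler's totient function. -/
open Finset

/-- Let `p ≥ 3` be prime, `L = lcm{1,...,p-1}`, and `A` the number of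
`x ∈ {1,...,L}` with exactly one divisor `d`, `1 < d < p`. Then
`lcm{1,...,p} = p·L`, and the number of `x ∈ {1,...,p·L}` with exactly one
divisor `d`, `1 < d ≤ p`, equals `(p-1)·A + φ(L)`. -/
theorem count_extend_by_prime (p : ℕ) (hp : p.Prime) (hp3 : 3 ≤ p) (L A : ℕ)
    (hL : L = (Finset.Icc 1 (p - 1)).lcm id)
    (hA : A = ((Finset.Icc 1 L).filter
      (fun x => ((Finset.Ioo 1 p).filter (fun d => d ∣ x)).card = 1)).card) :
    (Finset.Icc 1 p).lcm id = p * L ∧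
    ((Finset.Icc 1 (p * L)).filter
        (fun x => ((Finset.Ioc 1 p).filter (fun d => d ∣ x)).card = 1)).card =
      (p - 1) * A + Nat.totient L := by
  -- basic facts
  have hLd : L ∣ Nat.factorial (p-1) := by
    rw [hL]; exact Finset.lcm_dvd fun d hd => by
      simp only [mem_Icc] at hd
      exact Nat.dvd_factorial hd.1 hd.2
  have hpL : ¬ p ∣ L := fun h => by
    have := h.trans hLd
    rw [Nat.Prime.dvd_factorial hp] at this; omega
  have hL0 : 0 < L := Nat.pos_of_ne_zero (fun h => hpL (h ▸ dvd_zero p))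
  have h2L : 2 ∣ L := by
    rw [hL]; exact Finset.dvd_lcm (by simp [mem_Icc]; omega)
  have hL2 : 2 ≤ L := Nat.le_of_dvd hL0 h2L
  have hcop : Nat.Coprime p L := (hp.coprime_iff_not_dvd).mpr hpL
  have part1 : (Finset.Icc 1 p).lcm id = p * L := by
    have he : Finset.Icc 1 p = insert p (Finset.Icc 1 (p-1)) := by
      ext d; simp [Finset.mem_Icc, Finset.mem_insert]; omega
    rw [he, Finset.lcm_insert, id, ← hL]
    exact Nat.Coprime.lcm_eq_mul hcop
  refine ⟨part1, ?_⟩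
  -- every d in (1,p) divides L
  have hdL : ∀ d : ℕ, 1 < d → d < p → d ∣ L := fun d h1 h2 => by
    rw [hL]
    exact Finset.dvd_lcm (by simp [mem_Icc]; omega)
  -- non-coprime gives a divisor in (1,p)
  have hnc : ∀ x : ℕ, ¬ Nat.Coprime x L → ∃ d, 1 < d ∧ d < p ∧ d ∣ x := by
    intro x hx
    set g := Nat.gcd x L with hg
    have hg1 : g ≠ 1 := hx
    have hgL : g ∣ L := Nat.gcd_dvd_right x L
    have hq := Nat.minFac_prime hg1
    refine ⟨g.minFac, hq.one_lt, ?_, (Nat.minFac_dvd g).trans (Nat.gcd_dvd_left x L)⟩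
    have hdf : g.minFac ∣ Nat.factorial (p-1) := ((Nat.minFac_dvd g).trans hgL).trans hLd
    have h2 := (Nat.Prime.dvd_factorial hq).mp hdf
    have h3 := hq.two_le
    omega
  -- dvd transfer
  have hdvd : ∀ d x y : ℕ, x ≡ y [MOD d] → (d ∣ x ↔ d ∣ y) := by
    intro d x y h
    constructor <;> intro hd
    · exact (Nat.modEq_zero_iff_dvd).mp ((h.symm.trans (Nat.modEq_zero_iff_dvd.mpr hd)))
    · exact (Nat.modEq_zero_iff_dvd).mp ((h.trans (Nat.modEq_zero_iff_dvd.mpr hd)))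
  -- condition transfer along ModEq L
  have hcond : ∀ x y : ℕ, x ≡ y [MOD L] →
      (((Finset.Ioo 1 p).filter (fun d => d ∣ x)) = ((Finset.Ioo 1 p).filter (fun d => d ∣ y))) := by
    intro x y h
    ext d
    simp only [mem_filter, mem_Ioo, and_congr_right_iff]
    intro hd
    exact hdvd d x y (h.of_dvd (hdL d hd.1 hd.2))
  -- pointwise description of the Ioc condition
  have hIoc : Finset.Ioc 1 p = insert p (Finset.Ioo 1 p) := by
    ext d; simp [Finset.mem_Ioc, Finset.mem_Ioo]; omega
  -- split the count by p ∣ x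
  rw [← Finset.card_filter_add_card_filter_not (s :=
    ((Finset.Icc 1 (p * L)).filter (fun x => ((Finset.Ioc 1 p).filter (fun d => d ∣ x)).card = 1)))
    (p := fun x => p ∣ x), Finset.filter_filter, Finset.filter_filter, add_comm]
  congr 1
  · -- part with ¬ p ∣ x : equals (p-1) * A
    have hset : ((Finset.Icc 1 (p * L)).filter
        (fun x => ((Finset.Ioc 1 p).filter (fun d => d ∣ x)).card = 1 ∧ ¬ p ∣ x)) =
        ((Finset.Icc 1 (p * L)).filter
        (fun x => (((Finset.Ioo 1 p).filter (fun d => d ∣ x)).card = 1 ∧ ¬ p ∣ x))) := by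
      apply Finset.filter_congr
      intro x hx
      simp only [and_congr_left_iff]
      intro hpx
      have : (Finset.Ioc 1 p).filter (fun d => d ∣ x) = (Finset.Ioo 1 p).filter (fun d => d ∣ x) := by
        rw [hIoc, Finset.filter_insert, if_neg hpx]
      rw [this]
    rw [hset]
    -- bijection with ((Icc 1 L).filter cond) ×ˢ (Ico 1 p)
    have hcard : (((Finset.Icc 1 L).filter
        (fun x => ((Finset.Ioo 1 p).filter (fun d => d ∣ x)).card = 1)) ×ˢ (Finset.Ico 1 p)).card
        = A * (p - 1) := by
      rw [Finset.card_product, ← hA, Nat.card_Ico]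
    rw [Nat.mul_comm (p-1) A, ← hcard]
    apply Finset.card_bij (fun x _ => ((x - 1) % L + 1, x % p))
    · -- maps into target
      intro x hx
      simp only [mem_filter, mem_Icc] at hx
      obtain ⟨⟨hx1, hx2⟩, hcnd, hpx⟩ := hx
      have hmx : x ≡ (x - 1) % L + 1 [MOD L] := by
        conv_lhs => rw [show x = (x - 1) + 1 by omega]
        exact ((Nat.mod_modEq (x-1) L).symm).add_right 1
      simp only [Finset.mem_product, mem_filter, mem_Icc, mem_Ico]
      refine ⟨⟨⟨by omega, by have := Nat.mod_lt (x-1) hL0; omega⟩, ?_⟩, ?_, Nat.mod_lt x (by omega)⟩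
      · rw [← hcond x _ hmx]; exact hcnd
      · rcases Nat.eq_zero_or_pos (x % p) with h | h
        · exact absurd (Nat.dvd_iff_mod_eq_zero.mpr h) hpx
        · omega
    · -- injective
      intro x hx x' hx' heq
      simp only [mem_filter, mem_Icc] at hx hx'
      simp only [Prod.mk.injEq] at heq
      have h1 : x - 1 ≡ x' - 1 [MOD L] := by
        unfold Nat.ModEq; omega
      have h2 : x - 1 ≡ x' - 1 [MOD p] := by
        have hm : x ≡ x' [MOD p] := heq.2
        refine Nat.ModEq.add_right_cancel' 1 ?_
        have e1 : x - 1 + 1 = x := by omega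
        have e2 : x' - 1 + 1 = x' := by omega
        rw [e1, e2]; exact hm
      have h3 : x - 1 ≡ x' - 1 [MOD L * p] :=
        (Nat.modEq_and_modEq_iff_modEq_mul hcop.symm).mp ⟨h1, h2⟩
      have h4 : (x - 1) % (L * p) = (x' - 1) % (L * p) := h3
      have hb1 : x - 1 < L * p := by
        rw [Nat.mul_comm]; exact lt_of_lt_of_le (by omega) hx.1.2
      have hb2 : x' - 1 < L * p := by
        rw [Nat.mul_comm]; exact lt_of_lt_of_le (by omega) hx'.1.2
      rw [Nat.mod_eq_of_lt hb1, Nat.mod_eq_of_lt hb2] at h4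
      omega
    · -- surjective
      intro yr hyr
      simp only [Finset.mem_product, mem_filter, mem_Icc, mem_Ico] at hyr
      obtain ⟨⟨⟨hy1, hy2⟩, hycnd⟩, hr1, hr2⟩ := hyr
      obtain ⟨y, r⟩ := yr
      simp only at hy1 hy2 hycnd hr1 hr2
      obtain ⟨c, hcp, hcL⟩ := Nat.chineseRemainder hcop r y
      set x : ℕ := if c % (p * L) = 0 then p * L else c % (p * L) with hxdef
      have hpL0 : 0 < p * L := by positivity
      have hxc : x ≡ c [MOD p * L] := by
        show x % (p * L) = c % (p * L)
        by_cases h : c % (p * L) = 0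
        · rw [hxdef, if_pos h, Nat.mod_self, h]
        · rw [hxdef, if_neg h, Nat.mod_mod_of_dvd c dvd_rfl]
      have hxmem : 1 ≤ x ∧ x ≤ p * L := by
        have := Nat.mod_lt c hpL0
        by_cases h : c % (p * L) = 0 <;> simp [hxdef, h] <;> omega
      have hxL : x ≡ y [MOD L] := (hxc.of_dvd (dvd_mul_left L p)).trans hcL
      have hxp : x ≡ r [MOD p] := (hxc.of_dvd (dvd_mul_right p L)).trans hcp
      have hxmodp : x % p = r := by
        have : x % p = r % p := hxp
        rw [Nat.mod_eq_of_lt hr2] at this; exact this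
      refine ⟨x, ?_, ?_⟩
      · simp only [mem_filter, mem_Icc]
        refine ⟨⟨hxmem.1, hxmem.2⟩, ?_, ?_⟩
        · rw [hcond x y hxL]; exact hycnd
        · intro hdx
          have h0 : x % p = 0 := Nat.dvd_iff_mod_eq_zero.mp hdx
          omega
      · simp only [Prod.mk.injEq]
        constructor
        · have h1 : x - 1 ≡ y - 1 [MOD L] := by
            refine Nat.ModEq.add_right_cancel' 1 ?_
            have e1 : x - 1 + 1 = x := by omega
            have e2 : y - 1 + 1 = y := by omega
            rw [e1, e2]; exact hxL
          have : (x - 1) % L = (y - 1) % L := h1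
          rw [Nat.mod_eq_of_lt (by omega : y - 1 < L)] at this
          omega
        · exact hxmodp
  · -- part with p ∣ x : equals totient L
    have hset2 : ((Finset.Icc 1 (p * L)).filter
        (fun x => ((Finset.Ioc 1 p).filter (fun d => d ∣ x)).card = 1 ∧ p ∣ x)) =
        ((Finset.Icc 1 (p * L)).filter (fun x => p ∣ x ∧ Nat.Coprime x L)) := by
      apply Finset.filter_congr
      intro x hx
      constructor
      · rintro ⟨hc, hdx⟩
        refine ⟨hdx, ?_⟩
        by_contra hco
        obtain ⟨d, hd1, hd2, hd3⟩ := hnc x hco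
        have hmem : d ∈ (Finset.Ioc 1 p).filter (fun d => d ∣ x) := by
          simp only [mem_filter, mem_Ioc]
          exact ⟨⟨by omega, by omega⟩, hd3⟩
        have hmem2 : p ∈ (Finset.Ioc 1 p).filter (fun d => d ∣ x) := by
          simp only [mem_filter, mem_Ioc]
          exact ⟨⟨by omega, le_refl p⟩, hdx⟩
        have := Finset.one_lt_card.mpr ⟨d, hmem, p, hmem2, by omega⟩
        omega
      · rintro ⟨hdx, hco⟩
        refine ⟨?_, hdx⟩
        have : (Finset.Ioc 1 p).filter (fun d => d ∣ x) = {p} := by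
          ext d
          simp only [mem_filter, mem_Ioc, Finset.mem_singleton]
          constructor
          · rintro ⟨⟨hd1, hd2⟩, hd3⟩
            by_contra hne
            have hdL' : d ∣ L := hdL d hd1 (by omega)
            have hg : d ∣ Nat.gcd x L := Nat.dvd_gcd hd3 hdL'
            rw [hco] at hg
            have := Nat.le_of_dvd one_pos hg
            omega
          · exact fun h => ⟨⟨by omega, by omega⟩, h ▸ hdx⟩
        rw [this, Finset.card_singleton]
    rw [hset2, Nat.totient_eq_card_coprime]
    apply Finset.card_bij (fun x _ => x / p)
    · intro x hx
      simp only [mem_filter, mem_Icc] at hx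
      obtain ⟨⟨hx1, hx2⟩, hdx, hco⟩ := hx
      simp only [mem_filter, Finset.mem_range]
      have hle : x / p ≤ L := by
        have h : x / p ≤ p * L / p := Nat.div_le_div_right hx2
        rwa [Nat.mul_div_cancel_left L (by omega : 0 < p)] at h
      have hne : x / p ≠ L := by
        intro h
        have hLx : L ∣ x := h ▸ Nat.div_dvd_of_dvd hdx
        have : L ∣ Nat.gcd x L := Nat.dvd_gcd hLx dvd_rfl
        rw [hco] at this
        have := Nat.le_of_dvd one_pos this
        omega
      exact ⟨by omega, (Nat.Coprime.coprime_dvd_left (Nat.div_dvd_of_dvd hdx) hco).symm⟩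
    · intro x hx x' hx' heq
      simp only [mem_filter, mem_Icc] at hx hx'
      have e1 : x = p * (x / p) := (Nat.mul_div_cancel' hx.2.1).symm
      have e2 : x' = p * (x' / p) := (Nat.mul_div_cancel' hx'.2.1).symm
      rw [e1, e2, heq]
    · intro y hy
      simp only [mem_filter, Finset.mem_range] at hy
      obtain ⟨hyL, hyco⟩ := hy
      have hy0 : y ≠ 0 := by
        rintro rfl
        rw [Nat.coprime_zero_right] at hyco
        omega
      refine ⟨p * y, ?_, Nat.mul_div_cancel_left y (by omega)⟩
      simp only [mem_filter, mem_Icc]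
      refine ⟨⟨Nat.mul_pos (by omega) (by omega), Nat.mul_le_mul_left p (by omega)⟩,
        Dvd.intro y rfl, Nat.Coprime.mul hcop hyco.symm⟩
end

section
/- One has δ_1(3,6) = 7/20, δ_1(3,7) = 1/3, and δ_1(3,8) = 38/105; in particular δ_1(3,7) < δ_1(3,6) and δ_1(3,7) < δ_1(3,8), so the sequence (δ_1(3,m))_{m ≥ 5} is not unimodal. -/
set_option maxRecDepth 10000

lemma L6' : Llcm 3 6 = 20 := by decide
lemma L7' : Llcm 3 7 = 60 := by decide
lemma L8' : Llcm 3 8 = 420 := by decide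

lemma d6' : delta 1 3 6 = 7 / 20 := by
  have h : ((Finset.Icc 1 20).filter
      (fun x => ((Finset.Ioo 3 6).filter (fun d => d ∣ x)).card = 1)).card = 7 := by decide
  rw [delta, L6', h]; norm_num

lemma d7' : delta 1 3 7 = 1 / 3 := by
  have h : ((Finset.Icc 1 60).filter
      (fun x => ((Finset.Ioo 3 7).filter (fun d => d ∣ x)).card = 1)).card = 20 := by decide
  rw [delta, L7', h]; norm_num

lemma d8' : delta 1 3 8 = 38 / 105 := by
  have h : ((Finset.Icc 1 420).filter
      (fun x => ((Finset.Ioo 3 8).filter (fun d => d ∣ x)).card = 1)).card = 152 := by decide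
  rw [delta, L8', h]; norm_num

/-- `δ_1(3,6) = 7/20`, `δ_1(3,7) = 1/3`, `δ_1(3,8) = 38/105`; in particular
`δ_1(3,7) < δ_1(3,6)` and `δ_1(3,7) < δ_1(3,8)`, so `(δ_1(3,m))_{m ≥ 5}`
is not unimodal. -/
theorem delta_one_three_not_unimodal :
    delta 1 3 6 = 7 / 20 ∧ delta 1 3 7 = 1 / 3 ∧ delta 1 3 8 = 38 / 105 ∧
    delta 1 3 7 < delta 1 3 6 ∧ delta 1 3 7 < delta 1 3 8 ∧
    ¬ ∃ mstar : ℕ,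
      (∀ m : ℕ, 5 ≤ m → m < mstar → delta 1 3 m ≤ delta 1 3 (m + 1)) ∧
      (∀ m : ℕ, 5 ≤ m → mstar ≤ m → delta 1 3 (m + 1) ≤ delta 1 3 m) := by
  have h76 : delta 1 3 7 < delta 1 3 6 := by rw [d6', d7']; norm_num
  have h78 : delta 1 3 7 < delta 1 3 8 := by rw [d7', d8']; norm_num
  refine ⟨d6', d7', d8', h76, h78, ?_⟩
  rintro ⟨mstar, hinc, hdec⟩
  rcases le_or_gt mstar 7 with h | h
  · exact absurd (hdec 7 (by norm_num) h) (by simpa using h78.not_ge)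
  · exact absurd (hinc 6 (by norm_num) (by omega)) (by simpa using h76.not_ge)
end

section
/- For every integer n ≥ 2 and every prime p > n, one has δ_1(n, 2p+1) < δ_1(n, 2p). (No integer has 2p as its only divisor in (n, 2p+1), since any multiple of 2p is also a multiple of p, while there exist residues, such as x = 2p itself, whose only divisor in (n,2p) is p but which gain the second divisor 2p when the interval is extended.) -/
/-- For every integer `n ≥ 2` and every prime `p > n`, `δ_1(n, 2p+1) < δ_1(n, 2p)`. -/
theorem delta_one_drops_at_twice_prime (n p : ℕ) (hn : 2 ≤ n) (hp : p.Prime)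
    (hpn : n < p) : delta 1 n (2 * p + 1) < delta 1 n (2 * p) := by
  have hp0 : 0 < p := hp.pos
  have hpmem : p ∈ Finset.Ioo n (2 * p) := by
    simp only [Finset.mem_Ioo]; omega
  set L := Llcm n (2 * p) with hLdef
  have hpdvd : p ∣ L := Finset.dvd_lcm hpmem
  have h2dvd : 2 ∣ L := by
    rcases Nat.even_or_odd n with he | ho
    · have hmem : (n + 2) ∈ Finset.Ioo n (2 * p) := by
        simp only [Finset.mem_Ioo]; omega
      have h2 : (2 : ℕ) ∣ n + 2 := by
        have := Nat.even_iff.mp he; omega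
      exact dvd_trans h2 (Finset.dvd_lcm hmem)
    · have hmem : (n + 1) ∈ Finset.Ioo n (2 * p) := by
        simp only [Finset.mem_Ioo]; omega
      have h2 : (2 : ℕ) ∣ n + 1 := by
        have := Nat.odd_iff.mp ho; omega
      exact dvd_trans h2 (Finset.dvd_lcm hmem)
  have hcop : Nat.Coprime 2 p := (Nat.coprime_primes Nat.prime_two hp).mpr (by omega)
  have h2p : 2 * p ∣ L := hcop.mul_dvd_of_dvd_of_dvd h2dvd hpdvd
  have hL0 : L ≠ 0 := by
    intro h
    have : (0 : ℕ) ∈ Finset.Ioo n (2 * p) := by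
      have := Finset.lcm_eq_zero_iff (s := Finset.Ioo n (2 * p)) (f := id)
      simp only [hLdef, Llcm] at h
      rw [this] at h
      simpa using h
    simp only [Finset.mem_Ioo] at this
    omega
  have hIoo : Finset.Ioo n (2 * p + 1) = insert (2 * p) (Finset.Ioo n (2 * p)) := by
    ext d
    simp only [Finset.mem_Ioo, Finset.mem_insert]
    omega
  have hLL : Llcm n (2 * p + 1) = L := by
    rw [Llcm, hIoo, Finset.lcm_insert]
    exact Nat.dvd_antisymm (lcm_dvd h2p (by exact hLdef ▸ dvd_rfl)) (dvd_lcm_right _ _)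
  -- divisors of 2p in (n, 2p) is exactly {p}
  have hfilt : (Finset.Ioo n (2 * p)).filter (fun d => d ∣ 2 * p) = {p} := by
    ext d
    simp only [Finset.mem_filter, Finset.mem_Ioo, Finset.mem_singleton]
    constructor
    · rintro ⟨⟨h1, h2⟩, hd⟩
      by_cases hpd : p ∣ d
      · obtain ⟨k, rfl⟩ := hpd
        have hk2 : k ∣ 2 := by
          have hd' : p * k ∣ p * 2 := by rwa [mul_comm 2 p] at hd
          exact (mul_dvd_mul_iff_left (by omega : p ≠ 0)).mp hd'
        have hkle : k ≤ 2 := Nat.le_of_dvd (by omega) hk2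
        interval_cases k
        · omega
        · omega
        · omega
      · have hc : Nat.Coprime d p := (Nat.Prime.coprime_iff_not_dvd hp).mpr hpd |>.symm
        have : d ∣ 2 := hc.dvd_of_dvd_mul_right hd
        have := Nat.le_of_dvd (by norm_num) this
        omega
    · rintro rfl
      exact ⟨⟨hpn, by omega⟩, ⟨2, by ring⟩⟩
  -- the counted sets
  set S := (Finset.Icc 1 L).filter
      (fun x => ((Finset.Ioo n (2 * p)).filter (fun d => d ∣ x)).card = 1) with hS
  set S' := (Finset.Icc 1 L).filter
      (fun x => ((Finset.Ioo n (2 * p + 1)).filter (fun d => d ∣ x)).card = 1) with hS'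
  have key : ∀ x : ℕ, ((Finset.Ioo n (2 * p + 1)).filter (fun d => d ∣ x)).card =
      ((Finset.Ioo n (2 * p)).filter (fun d => d ∣ x)).card + (if 2 * p ∣ x then 1 else 0) := by
    intro x
    rw [hIoo, Finset.filter_insert]
    split
    · rw [Finset.card_insert_of_notMem (by simp)]
    · simp
  have hsub : S' ⊆ S := by
    intro x hx
    simp only [hS', Finset.mem_filter] at hx
    simp only [hS, Finset.mem_filter]
    refine ⟨hx.1, ?_⟩
    have hcard := hx.2
    rw [key x] at hcard
    by_cases h2px : 2 * p ∣ x
    · exfalso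
      simp only [h2px, if_true] at hcard
      have hc0 : ((Finset.Ioo n (2 * p)).filter (fun d => d ∣ x)).card = 0 := by omega
      have hpx : p ∈ (Finset.Ioo n (2 * p)).filter (fun d => d ∣ x) := by
        simp only [Finset.mem_filter]
        exact ⟨hpmem, dvd_trans ⟨2, by ring⟩ h2px⟩
      have := Finset.card_pos.mpr ⟨p, hpx⟩
      omega
    · simpa [h2px] using hcard
  have hmem2p : 2 * p ∈ S := by
    simp only [hS, Finset.mem_filter, Finset.mem_Icc]
    exact ⟨⟨by omega, Nat.le_of_dvd (Nat.pos_of_ne_zero hL0) h2p⟩, by rw [hfilt]; simp⟩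
  have hnmem2p : 2 * p ∉ S' := by
    simp only [hS', Finset.mem_filter, Finset.mem_Icc]
    intro h
    have := h.2
    rw [key (2 * p)] at this
    simp only [dvd_refl, if_true, hfilt] at this
    simp at this
  have hcard : S'.card < S.card :=
    Finset.card_lt_card (Finset.ssubset_iff_of_subset hsub |>.mpr ⟨2 * p, hmem2p, hnmem2p⟩)
  have hLpos : (0 : ℚ) < (L : ℚ) := by
    exact_mod_cast Nat.pos_of_ne_zero hL0
  unfold delta
  rw [hLL]
  rw [div_lt_div_iff_of_pos_right hLpos]
  exact_mod_cast hcard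
end

section
/- Let 1 ≤ n ≤ m-2 be integers and set L = lcm{1,2,...,m-1}. Then #{x ∈ {1,...,L} : x has no divisor d with n < d < m} ≥ Σ_{i=1}^{n} φ(L/i) ≥ (Σ_{i=1}^{n} 1/i)·φ(L), where φ is Euler's totient function. -/
lemma key_dvd (L i j t : ℕ) (hi : 0 < i) (hiL : i ∣ L) (hjL : j ∣ L)
    (ht : Nat.Coprime t (L / i)) (hd : j ∣ i * t) : j ∣ i := by
  set g := Nat.gcd j i with hg
  have hgpos : 0 < g := Nat.gcd_pos_of_pos_right _ hi
  have hgj : g ∣ j := Nat.gcd_dvd_left _ _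
  have hgi : g ∣ i := Nat.gcd_dvd_right _ _
  have hco : Nat.Coprime (j / g) (i / g) := Nat.coprime_div_gcd_div_gcd hgpos
  have h1 : j / g ∣ (i / g) * t := by
    have h2 : g * (j / g) ∣ g * ((i / g) * t) := by
      rw [Nat.mul_div_cancel' hgj, ← mul_assoc, Nat.mul_div_cancel' hgi]; exact hd
    exact (mul_dvd_mul_iff_left (by omega : g ≠ 0)).mp h2
  have h3 : j / g ∣ t := hco.dvd_of_dvd_mul_left h1
  have hlcm : Nat.lcm i j ∣ L := Nat.lcm_dvd hiL hjL
  have hlcm_eq : Nat.lcm i j = i * (j / g) := by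
    rw [Nat.lcm, Nat.gcd_comm i j, ← hg, Nat.mul_div_assoc _ hgj]
  have h4 : j / g ∣ L / i := (Nat.dvd_div_iff_mul_dvd hiL).mpr (hlcm_eq ▸ hlcm)
  have h5 : j / g ∣ 1 := by
    have := Nat.dvd_gcd h3 h4
    rwa [Nat.Coprime.gcd_eq_one ht] at this
  have h6 : j = g := by
    rw [← Nat.div_mul_cancel hgj, Nat.dvd_one.mp h5, one_mul]
  exact h6 ▸ hgi

lemma card_coprime_Icc (k : ℕ) (hk : 1 ≤ k) :
    ((Finset.Icc 1 k).filter (fun t => Nat.Coprime t k)).card = Nat.totient k := by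
  rcases eq_or_lt_of_le hk with h1 | h2
  · subst h1; decide
  · have hset : (Finset.Icc 1 k).filter (fun t => Nat.Coprime t k)
        = (Finset.range k).filter k.Coprime := by
      ext t
      simp only [Finset.mem_filter, Finset.mem_Icc, Finset.mem_range]
      constructor
      · rintro ⟨⟨ha, hb⟩, hc⟩
        refine ⟨lt_of_le_of_ne hb (fun h => ?_), hc.symm⟩
        subst h
        have : t = 1 := by simpa [Nat.Coprime, Nat.gcd_self] using hc
        omega
      · rintro ⟨ha, hc⟩
        have ht1 : 1 ≤ t := by
          rcases Nat.eq_zero_or_pos t with rfl | h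
          · have := Nat.coprime_zero_right k |>.mp hc; omega
          · exact h
        exact ⟨⟨ht1, le_of_lt ha⟩, hc.symm⟩
    rw [hset, Nat.totient_eq_card_coprime]

lemma totient_mul_le (a b : ℕ) : Nat.totient (a * b) ≤ a * Nat.totient b := by
  induction a using Nat.strong_induction_on with
  | _ a ih =>
    rcases Nat.lt_or_ge a 2 with h | h
    · interval_cases a <;> simp
    · set p := a.minFac with hp
      have hpp : p.Prime := Nat.minFac_prime (by omega)
      have hpd : p ∣ a := Nat.minFac_dvd a
      set c := a / p with hc
      have hcp : c < a := Nat.div_lt_self (by omega) hpp.one_lt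
      have hac : a = p * c := (Nat.mul_div_cancel' hpd).symm
      have hcb := ih c hcp
      have hab : a * b = p * (c * b) := by rw [hac, mul_assoc]
      rcases Classical.em (p ∣ c * b) with hdvd | hdvd
      · rw [hab, Nat.totient_mul_of_prime_of_dvd hpp hdvd, hac, mul_assoc]
        exact Nat.mul_le_mul_left p hcb
      · rw [hab, Nat.totient_mul_of_prime_of_not_dvd hpp hdvd, hac, mul_assoc]
        calc (p - 1) * (c * b).totient ≤ p * (c * b).totient :=
              Nat.mul_le_mul_right _ (by omega)
          _ ≤ p * (c * Nat.totient b) := Nat.mul_le_mul_left p hcb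

/-- Let `1 ≤ n ≤ m-2` and `L = lcm{1,...,m-1}`. Then the number of `x ∈ {1,...,L}`
with no divisor `d`, `n < d < m`, is at least `Σ_{i=1}^{n} φ(L/i)`, which in turn is at
least `(Σ_{i=1}^{n} 1/i)·φ(L)`. -/
theorem count_no_divisor_lower_bound (n m : ℕ) (hn : 1 ≤ n) (hnm : n + 2 ≤ m)
    (L : ℕ) (hL : L = (Finset.Icc 1 (m - 1)).lcm id) :
    (∑ i ∈ Finset.Icc 1 n, (Nat.totient (L / i) : ℚ)) ≤
      (((Finset.Icc 1 L).filter
        (fun x => ∀ d ∈ Finset.Ioo n m, ¬ d ∣ x)).card : ℚ) ∧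
    (∑ i ∈ Finset.Icc 1 n, (1 : ℚ) / (i : ℚ)) * (Nat.totient L : ℚ) ≤
      ∑ i ∈ Finset.Icc 1 n, (Nat.totient (L / i) : ℚ) := by
  -- basic divisibility facts
  have hdvdL : ∀ d, 1 ≤ d → d ≤ m - 1 → d ∣ L := by
    intro d h1 h2
    rw [hL]
    exact Finset.dvd_lcm (by simp [Finset.mem_Icc, h1, h2])
  have hLpos : 0 < L := by
    rcases Nat.eq_zero_or_pos L with h0 | h
    · exfalso
      have h1 : (1 : ℕ) ∣ L := hdvdL 1 le_rfl (by omega)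
      have hm1 : (m - 1) ∣ L := hdvdL (m - 1) (by omega) le_rfl
      rw [hL] at h0
      have := (Finset.lcm_eq_zero_iff (s := Finset.Icc 1 (m-1)) (f := id)).mp (hL ▸ h0)
      simp only [id, Set.mem_image, Finset.mem_coe, Finset.mem_Icc] at this
      obtain ⟨x, ⟨hx1, _⟩, hx0⟩ := this
      omega
    · exact h
  set S : ℕ → Finset ℕ := fun i =>
    ((Finset.Icc 1 (L / i)).filter (fun t => Nat.Coprime t (L / i))).image (fun t => i * t)
    with hS
  have hiL : ∀ i ∈ Finset.Icc 1 n, i ∣ L := by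
    intro i hi
    rw [Finset.mem_Icc] at hi
    exact hdvdL i hi.1 (by omega)
  -- card of each S i
  have hcard : ∀ i ∈ Finset.Icc 1 n, (S i).card = Nat.totient (L / i) := by
    intro i hi
    rw [Finset.mem_Icc] at hi
    have hipos : 0 < i := hi.1
    have hLi : 1 ≤ L / i := Nat.div_pos (Nat.le_of_dvd hLpos (hiL i (by simp [Finset.mem_Icc, hi.1, hi.2]))) hipos
    rw [hS]
    rw [Finset.card_image_of_injective _ (mul_right_injective₀ (by omega : i ≠ 0))]
    exact card_coprime_Icc _ hLi
  -- each S i is inside the filtered set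
  have hsub : ∀ i ∈ Finset.Icc 1 n, S i ⊆ (Finset.Icc 1 L).filter
      (fun x => ∀ d ∈ Finset.Ioo n m, ¬ d ∣ x) := by
    intro i hi x hx
    rw [Finset.mem_Icc] at hi
    have hiL' : i ∣ L := hiL i (by simp [Finset.mem_Icc, hi.1, hi.2])
    simp only [hS, Finset.mem_image, Finset.mem_filter, Finset.mem_Icc] at hx
    obtain ⟨t, ⟨⟨ht1, ht2⟩, htc⟩, rfl⟩ := hx
    rw [Finset.mem_filter, Finset.mem_Icc]
    refine ⟨⟨Nat.mul_pos (by omega) (by omega), ?_⟩, ?_⟩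
    · calc i * t ≤ i * (L / i) := Nat.mul_le_mul_left i ht2
        _ = L := Nat.mul_div_cancel' hiL'
    · intro d hd hddvd
      rw [Finset.mem_Ioo] at hd
      have hdL : d ∣ L := hdvdL d (by omega) (by omega)
      have := key_dvd L i d t (by omega) hiL' hdL htc hddvd
      have := Nat.le_of_dvd (by omega) this
      omega
  -- disjointness
  have hdisj : ∀ i ∈ (Finset.Icc 1 n), ∀ j ∈ (Finset.Icc 1 n), i ≠ j →
      Disjoint (S i) (S j) := by
    intro i hi j hj hij
    rw [Finset.mem_Icc] at hi hj
    have hiL' : i ∣ L := hdvdL i hi.1 (by omega)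
    have hjL' : j ∣ L := hdvdL j hj.1 (by omega)
    rw [Finset.disjoint_left]
    intro x hxi hxj
    simp only [hS, Finset.mem_image, Finset.mem_filter, Finset.mem_Icc] at hxi hxj
    obtain ⟨t, ⟨⟨ht1, ht2⟩, htc⟩, hxt⟩ := hxi
    obtain ⟨s, ⟨⟨hs1, hs2⟩, hsc⟩, hxs⟩ := hxj
    have h1 : j ∣ i := key_dvd L i j t (by omega) hiL' hjL' htc ⟨s, by omega⟩
    have h2 : i ∣ j := key_dvd L j i s (by omega) hjL' hiL' hsc ⟨t, by omega⟩
    exact hij (Nat.dvd_antisymm h2 h1)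
  -- first inequality
  have hfirst : (∑ i ∈ Finset.Icc 1 n, Nat.totient (L / i)) ≤
      ((Finset.Icc 1 L).filter (fun x => ∀ d ∈ Finset.Ioo n m, ¬ d ∣ x)).card := by
    have hb : ((Finset.Icc 1 n).biUnion S).card = ∑ i ∈ Finset.Icc 1 n, (S i).card :=
      Finset.card_biUnion hdisj
    have hb2 : ((Finset.Icc 1 n).biUnion S) ⊆ (Finset.Icc 1 L).filter
        (fun x => ∀ d ∈ Finset.Ioo n m, ¬ d ∣ x) := by
      intro x hx
      rw [Finset.mem_biUnion] at hx
      obtain ⟨i, hi, hxi⟩ := hx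
      exact hsub i hi hxi
    calc (∑ i ∈ Finset.Icc 1 n, Nat.totient (L / i))
        = ∑ i ∈ Finset.Icc 1 n, (S i).card := (Finset.sum_congr rfl hcard).symm
      _ = ((Finset.Icc 1 n).biUnion S).card := hb.symm
      _ ≤ _ := Finset.card_le_card hb2
  constructor
  · calc (∑ i ∈ Finset.Icc 1 n, (Nat.totient (L / i) : ℚ))
        = ((∑ i ∈ Finset.Icc 1 n, Nat.totient (L / i) : ℕ) : ℚ) := by push_cast; ring
      _ ≤ _ := by exact_mod_cast hfirst
  · rw [Finset.sum_mul]
    apply Finset.sum_le_sum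
    intro i hi
    rw [Finset.mem_Icc] at hi
    have hipos : 0 < i := hi.1
    have hiL' : i ∣ L := hdvdL i hi.1 (by omega)
    have hkey : Nat.totient L ≤ i * Nat.totient (L / i) := by
      calc Nat.totient L = Nat.totient (i * (L / i)) := by rw [Nat.mul_div_cancel' hiL']
        _ ≤ i * Nat.totient (L / i) := totient_mul_le i (L / i)
    rw [div_mul_eq_mul_div, one_mul, div_le_iff₀ (by exact_mod_cast hipos : (0:ℚ) < (i:ℚ))]
    calc (Nat.totient L : ℚ) ≤ ((i * Nat.totient (L/i) : ℕ) : ℚ) := by exact_mod_cast hkey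
      _ = (Nat.totient (L/i) : ℚ) * i := by push_cast; ring
end
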